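/- arXiv:2602.10532 — 3 statements merged into one kernel-verified Lean document; each statement's English description precedes it below -/
import Mathlib

section
/- For any n ≥ 1, r < n, and c ∈ {1,...,r}, the ratio (n-r)_{r-c} / (n)_r of falling factorials is at most (c^c / c!)·(1/n^c), which in turn is at most (r^r / r!)·(1/n^c). -/
/-!
Since `(n)_r = (n)_c · (n - c)_{r - c}` and `(n - r)_{r - c} ≤ (n - c)_{r - c}`, the ratio is at most
`1 / (n)_c`. Comparing `(n)_c` with `n ^ c` factor by factor, `(c - i) · n ≤ c · (n - i)`, gives
`n ^ c / (n)_c ≤ c ^ c / c!`. Finally `k ^ k / k!` is monotone: `r! / c! = (r)_{r - c} ≤ r ^ (r - c)`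
and `c ^ c ≤ r ^ c`.
-/

open Finset Nat

theorem Nat.factorial_mul_pow_le_pow_mul_descFactorial {n c : ℕ} (hcn : c ≤ n) :
    c ! * n ^ c ≤ c ^ c * n.descFactorial c := by
  have pow_eq_prod (x : ℕ) : x ^ c = ∏ _i ∈ range c, x := by simp
  rw [← descFactorial_self, descFactorial_eq_prod_range, descFactorial_eq_prod_range,
    pow_eq_prod n, pow_eq_prod c, ← prod_mul_distrib, ← prod_mul_distrib]
  refine prod_le_prod' fun i _ => ?_
  rw [Nat.sub_mul, Nat.mul_sub, Nat.mul_comm i n]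
  exact Nat.sub_le_sub_left (Nat.mul_le_mul_right i hcn) _

theorem Nat.pow_self_mul_factorial_le {c r : ℕ} (hcr : c ≤ r) :
    c ^ c * r ! ≤ r ^ r * c ! := by
  have hsplit : c ! * r.descFactorial (r - c) = r ! := by
    simpa [Nat.sub_sub_self hcr] using factorial_mul_descFactorial (Nat.sub_le r c)
  calc c ^ c * r ! = c ^ c * r.descFactorial (r - c) * c ! := by rw [← hsplit]; ring
    _ ≤ r ^ c * r ^ (r - c) * c ! := by
      gcongr
      exact descFactorial_le_pow r (r - c)
    _ = r ^ r * c ! := by rw [← pow_add, Nat.add_sub_cancel' hcr]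

theorem Nat.descFactorial_sub_div_descFactorial_le {n r c : ℕ} (hcr : c ≤ r) :
    ((n - r).descFactorial (r - c) : ℝ) / n.descFactorial r ≤ 1 / n.descFactorial c := by
  rw [← descFactorial_mul_descFactorial hcr, cast_mul, ← div_div]
  refine div_le_div_of_nonneg_right (div_le_one_of_le₀ ?_ (cast_nonneg _)) (cast_nonneg _)
  exact_mod_cast descFactorial_le _ (Nat.sub_le_sub_left hcr n)

theorem falling_factorial_ratio_bound_general (n r c : ℕ) (hr : r < n) (hcr : c ≤ r) :
    ((n - r).descFactorial (r - c) : ℝ) / (n.descFactorial r) ≤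
        ((c : ℝ) ^ c / c.factorial) * (1 / (n : ℝ) ^ c) ∧
    ((c : ℝ) ^ c / c.factorial) * (1 / (n : ℝ) ^ c) ≤
        ((r : ℝ) ^ r / r.factorial) * (1 / (n : ℝ) ^ c) := by
  have hcn : c ≤ n := hcr.trans hr.le
  have hn : 0 < n := by omega
  have hdesc : (0 : ℝ) < n.descFactorial c := by exact_mod_cast descFactorial_pos.mpr hcn
  refine ⟨(descFactorial_sub_div_descFactorial_le hcr).trans ?_, ?_⟩
  · rw [mul_one_div, div_div, div_le_div_iff₀ hdesc (by positivity), one_mul]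
    exact_mod_cast factorial_mul_pow_le_pow_mul_descFactorial hcn
  · gcongr ?_ * _
    rw [div_le_div_iff₀ (by positivity) (by positivity)]
    exact_mod_cast pow_self_mul_factorial_le hcr

theorem falling_factorial_ratio_bound (n r c : ℕ) (hn : 1 ≤ n) (hr : r < n)
    (hc1 : 1 ≤ c) (hcr : c ≤ r) :
    ((n - r).descFactorial (r - c) : ℝ) / (n.descFactorial r) ≤
        ((c : ℝ) ^ c / c.factorial) * (1 / (n : ℝ) ^ c) ∧
    ((c : ℝ) ^ c / c.factorial) * (1 / (n : ℝ) ^ c) ≤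
        ((r : ℝ) ^ r / r.factorial) * (1 / (n : ℝ) ^ c) :=
  falling_factorial_ratio_bound_general n r c hr hcr
end

section
/- Fix p ∈ [1,2) and β > 0, and define φ_{p,β}(u) := |u|^p · tanh(β·|u|^{2-p}). There exists a constant C_p > 0 depending only on p such that |φ''_{p,β}(u)| ≤ C_p·β for all u ∈ ℝ. -/
/-!
On `(0, ∞)` put `t = β v ^ (2 - p)`. Then `φ_{p,β}'' = β K(t)` with
`K(t) = p(p-1) (tanh t / t) + (2-p)(p+1) sech² t - 2(2-p)² t tanh t sech² t`, and the three
functions of `t` appearing here all take values in `[0, 1]`. Since the weights `p(p-1)` and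
`(2-p)(p+1)` sum to `2` and `2(2-p)² ≤ 2`, this gives `|K| ≤ 2`. As `φ_{p,β}` is even with
`|φ_{p,β}(u)| ≤ β u²`, its derivative vanishes at `0`, and `φ_{p,β}''(0)` is the limit of
`φ_{p,β}'(v) / v = β (p tanh t / t + (2-p) sech² t) → 2β`. So `C_p = 2` works.
-/

open Real Filter Topology Asymptotics

namespace Real

theorem hasDerivAt_tanh (x : ℝ) : HasDerivAt tanh (1 / cosh x ^ 2) x := by
  rw [show tanh = fun y => sinh y / cosh y from funext tanh_eq_sinh_div_cosh]
  refine ((hasDerivAt_sinh x).div (hasDerivAt_cosh x) (cosh_pos x).ne').congr_deriv ?_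
  rw [← cosh_sq_sub_sinh_sq x]
  ring

theorem tendsto_tanh_div_self : Tendsto (fun t => tanh t / t) (𝓝[≠] 0) (𝓝 1) := by
  have h := hasDerivAt_iff_tendsto_slope.mp (hasDerivAt_tanh 0)
  rw [cosh_zero, one_pow, div_one] at h
  exact h.congr fun t => by simp [slope_def_field]

theorem tanh_nonneg {x : ℝ} (hx : 0 ≤ x) : 0 ≤ tanh x := by
  rw [tanh_eq_sinh_div_cosh]
  exact div_nonneg (sinh_nonneg_iff.mpr hx) (cosh_pos x).le

theorem tanh_le_self {x : ℝ} (hx : 0 ≤ x) : tanh x ≤ x := by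
  have hderiv (y : ℝ) : HasDerivAt (fun y => y - tanh y) (1 - 1 / cosh y ^ 2) y :=
    (hasDerivAt_id' y).sub (hasDerivAt_tanh y)
  have hmono : Monotone fun y => y - tanh y := by
    refine monotone_of_deriv_nonneg (fun y => (hderiv y).differentiableAt) fun y => ?_
    rw [(hderiv y).deriv, sub_nonneg, div_le_one (by positivity)]
    exact one_le_pow₀ (one_le_cosh y)
  have h := hmono hx
  simp only [tanh_zero, sub_zero] at h
  linarith

theorem mul_tanh_le_cosh_sq {x : ℝ} (hx : 0 ≤ x) : x * tanh x ≤ cosh x ^ 2 := by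
  have h := mul_le_mul_of_nonneg_left (tanh_le_self hx) hx
  have hs := self_le_sinh_iff.mpr hx
  nlinarith [cosh_sq x]

theorem rpow_mul_rpow_two_sub {v : ℝ} (hv : 0 < v) (p : ℝ) : v ^ p * v ^ (2 - p) = v ^ 2 := by
  rw [← rpow_add hv, add_sub_cancel, rpow_two]

end Real

theorem HasDerivAt.tanh {f : ℝ → ℝ} {f' x : ℝ} (hf : HasDerivAt f f' x) :
    HasDerivAt (fun x => Real.tanh (f x)) (f' / Real.cosh (f x) ^ 2) x :=
  ((hasDerivAt_tanh (f x)).comp x hf).congr_deriv (by ring)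

theorem HasDerivAt.comp_abs {F : ℝ → ℝ} {F' u : ℝ} (hu : u ≠ 0) (hF : HasDerivAt F F' |u|) :
    HasDerivAt (fun x => F |x|) (SignType.sign u * F') u :=
  (hF.comp u (hasDerivAt_abs hu)).congr_deriv (mul_comm _ _)

theorem eventually_sign_eq {u : ℝ} (hu : u ≠ 0) :
    ∀ᶠ x in 𝓝 u, (SignType.sign x : ℝ) = SignType.sign u := by
  rcases hu.lt_or_gt with hu | hu
  · filter_upwards [Iio_mem_nhds hu] with x hx
    rw [sign_neg hu, sign_neg hx]
  · filter_upwards [Ioi_mem_nhds hu] with x hx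
    rw [sign_pos hu, sign_pos hx]

theorem hasDerivAt_sign_mul_comp_abs {G : ℝ → ℝ} {G' u : ℝ} (hu : u ≠ 0)
    (hG : HasDerivAt G G' |u|) : HasDerivAt (fun x => SignType.sign x * G |x|) G' u := by
  have hsq : (SignType.sign u : ℝ) * SignType.sign u = 1 := by
    rcases hu.lt_or_gt with hu | hu <;> simp [hu]
  have h := (hG.comp_abs hu).const_mul (SignType.sign u : ℝ)
  rw [← mul_assoc, hsq, one_mul] at h
  exact h.congr_of_eventuallyEq ((eventually_sign_eq hu).mono fun x hx => by simp only [hx])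

theorem hasDerivAt_sign_mul_comp_abs_zero {G : ℝ → ℝ} {L : ℝ}
    (hG : Tendsto (fun v => G v / v) (𝓝[>] 0) (𝓝 L)) :
    HasDerivAt (fun x => SignType.sign x * G |x|) L 0 := by
  rw [hasDerivAt_iff_tendsto_slope]
  refine (hG.comp tendsto_abs_nhdsNE_zero).congr fun x => ?_
  rw [Function.comp_apply, slope_def_field]
  rcases lt_trichotomy x 0 with hx | rfl | hx
  · simp [hx, abs_of_neg hx, div_neg, neg_div]
  · simp
  · simp [hx, abs_of_pos hx]

theorem hasDerivAt_zero_of_abs_le_mul_sq {f : ℝ → ℝ} {C : ℝ} (hf : ∀ x, |f x| ≤ C * x ^ 2) :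
    HasDerivAt f 0 0 := by
  have hf0 : f 0 = 0 := abs_nonpos_iff.mp (by simpa using hf 0)
  rw [hasDerivAt_iff_isLittleO_nhds_zero]
  simp only [zero_add, hf0, sub_zero, smul_zero]
  refine (IsBigO.of_bound C (Eventually.of_forall fun x => ?_)).trans_isLittleO
    (isLittleO_pow_id one_lt_two)
  simpa [Real.norm_eq_abs] using hf x

theorem deriv_comp_abs {F F' : ℝ → ℝ} {C : ℝ} (hF : ∀ v, 0 < v → HasDerivAt F (F' v) v)
    (hC : ∀ x, |F (|x|)| ≤ C * x ^ 2) :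
    deriv (fun x => F |x|) = fun x => SignType.sign x * F' |x| := by
  funext x
  rcases eq_or_ne x 0 with rfl | hx
  · simpa using (hasDerivAt_zero_of_abs_le_mul_sq hC).deriv
  · exact ((hF _ (abs_pos.mpr hx)).comp_abs hx).deriv

theorem abs_weighted_sum_le_two {p a b c : ℝ} (hp1 : 1 ≤ p) (hp2 : p ≤ 2)
    (ha : a ∈ Set.Icc (0 : ℝ) 1) (hb : b ∈ Set.Icc (0 : ℝ) 1) (hc : c ∈ Set.Icc (0 : ℝ) 1) :
    |p * (p - 1) * a + (2 - p) * (p + 1) * b - 2 * (2 - p) ^ 2 * c| ≤ 2 := by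
  obtain ⟨ha0, ha1⟩ := ha
  obtain ⟨hb0, hb1⟩ := hb
  obtain ⟨hc0, hc1⟩ := hc
  have hw1 : 0 ≤ p * (p - 1) := by nlinarith
  have hw2 : 0 ≤ (2 - p) * (p + 1) := by nlinarith
  have hw3 : (2 - p) ^ 2 ≤ 1 := by nlinarith
  rw [abs_le]
  constructor
  · nlinarith [mul_nonneg hw1 ha0, mul_nonneg hw2 hb0,
      mul_le_mul_of_nonneg_left hc1 (sq_nonneg (2 - p))]
  · nlinarith [mul_le_mul_of_nonneg_left ha1 hw1, mul_le_mul_of_nonneg_left hb1 hw2,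
      mul_nonneg (sq_nonneg (2 - p)) hc0]

/-- `φ_{p,β}` restricted to `(0, ∞)`; on all of `ℝ`, `φ_{p,β} u = smoothedPow p β |u|`. -/
noncomputable def smoothedPow (p β v : ℝ) : ℝ := v ^ p * tanh (β * v ^ (2 - p))

noncomputable def smoothedPowDeriv (p β v : ℝ) : ℝ :=
  p * v ^ (p - 1) * tanh (β * v ^ (2 - p)) + β * (2 - p) * v / cosh (β * v ^ (2 - p)) ^ 2

noncomputable def smoothedPowDeriv2 (p β v : ℝ) : ℝ :=
  p * (p - 1) * v ^ (p - 2) * tanh (β * v ^ (2 - p)) +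
    β * (2 - p) * (p + 1) / cosh (β * v ^ (2 - p)) ^ 2 -
    2 * β ^ 2 * (2 - p) ^ 2 * v ^ (2 - p) * tanh (β * v ^ (2 - p)) / cosh (β * v ^ (2 - p)) ^ 2

section

variable (p β : ℝ) {v : ℝ}

theorem hasDerivAt_smoothedPow (hv : 0 < v) :
    HasDerivAt (smoothedPow p β) (smoothedPowDeriv p β v) v := by
  have ht : HasDerivAt (fun w => β * w ^ (2 - p)) (β * ((2 - p) * v ^ (2 - p - 1))) v :=
    (hasDerivAt_rpow_const (Or.inl hv.ne')).const_mul β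
  refine ((hasDerivAt_rpow_const (p := p) (Or.inl hv.ne')).mul ht.tanh).congr_deriv ?_
  rw [smoothedPowDeriv, rpow_sub_one hv.ne', rpow_sub_one hv.ne']
  have hab := rpow_mul_rpow_two_sub hv p
  generalize v ^ p = a at *
  generalize v ^ (2 - p) = b at *
  field_simp
  linear_combination (β * (2 - p)) * hab

theorem hasDerivAt_smoothedPowDeriv (hv : 0 < v) :
    HasDerivAt (smoothedPowDeriv p β) (smoothedPowDeriv2 p β v) v := by
  have ht : HasDerivAt (fun w => β * w ^ (2 - p)) (β * ((2 - p) * v ^ (2 - p - 1))) v :=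
    (hasDerivAt_rpow_const (Or.inl hv.ne')).const_mul β
  have hc : cosh (β * v ^ (2 - p)) ^ 2 ≠ 0 := by positivity
  refine ((((hasDerivAt_rpow_const (Or.inl hv.ne')).const_mul p).mul ht.tanh).add
    (((hasDerivAt_id' v).const_mul (β * (2 - p))).div (ht.cosh.pow 2) hc)).congr_deriv ?_
  rw [smoothedPowDeriv2, rpow_sub_one hv.ne', rpow_sub_one hv.ne', rpow_sub_one hv.ne',
    rpow_sub hv p 2, rpow_two, tanh_eq_sinh_div_cosh, Pi.pow_apply]
  have hab := rpow_mul_rpow_two_sub hv p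
  generalize v ^ p = a at *
  generalize v ^ (2 - p) = b at *
  field_simp
  linear_combination β * p * (2 - p) * cosh (β * b) ^ 2 * hab

theorem tendsto_smoothedPowDeriv_div_self (hp : p < 2) (hβ : β ≠ 0) :
    Tendsto (fun v => smoothedPowDeriv p β v / v) (𝓝[>] 0) (𝓝 (2 * β)) := by
  have ht : Tendsto (fun v => β * v ^ (2 - p)) (𝓝[>] 0) (𝓝[≠] 0) := by
    refine tendsto_nhdsWithin_iff.mpr ⟨?_, ?_⟩
    · have h := ((continuousAt_rpow_const 0 (2 - p) (Or.inr (by linarith))).const_mul β).tendsto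
      rw [zero_rpow (by linarith), mul_zero] at h
      exact h.mono_left nhdsWithin_le_nhds
    · filter_upwards [self_mem_nhdsWithin] with v (hv : 0 < v)
      exact mul_ne_zero hβ (rpow_pos_of_pos hv _).ne'
  have hsech : Tendsto (fun t => 1 / cosh t ^ 2) (𝓝[≠] 0) (𝓝 1) := by
    have h : Continuous fun t => 1 / cosh t ^ 2 :=
      continuous_const.div (continuous_cosh.pow 2) fun t => by positivity
    simpa using h.continuousAt.tendsto.mono_left (nhdsWithin_le_nhds (a := (0 : ℝ)))
  have h := ((tendsto_tanh_div_self.comp ht).const_mul (p * β)).add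
    ((hsech.comp ht).const_mul (β * (2 - p)))
  rw [show p * β * 1 + β * (2 - p) * 1 = 2 * β by ring] at h
  refine h.congr' ?_
  filter_upwards [self_mem_nhdsWithin] with v (hv : 0 < v)
  simp only [Function.comp_apply, smoothedPowDeriv]
  rw [rpow_sub_one hv.ne']
  have hab := rpow_mul_rpow_two_sub hv p
  generalize v ^ p = a at *
  have hb := rpow_pos_of_pos hv (2 - p)
  generalize v ^ (2 - p) = b at *
  field_simp
  linear_combination (-p * tanh (β * b) * cosh (β * b) ^ 2) * hab

theorem abs_smoothedPow_le (hβ : 0 ≤ β) (x : ℝ) : |smoothedPow p β (|x|)| ≤ β * x ^ 2 := by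
  rcases eq_or_ne x 0 with rfl | hx
  · rcases eq_or_ne p 0 with rfl | hp <;> simp [smoothedPow, *]
  have hx' := abs_pos.mpr hx
  have ht : 0 ≤ β * |x| ^ (2 - p) := by positivity
  rw [smoothedPow, abs_of_nonneg (mul_nonneg (by positivity) (tanh_nonneg ht))]
  calc |x| ^ p * tanh (β * |x| ^ (2 - p)) ≤ |x| ^ p * (β * |x| ^ (2 - p)) := by
        gcongr; exact tanh_le_self ht
    _ = β * x ^ 2 := by
        rw [mul_left_comm, rpow_mul_rpow_two_sub hx', sq_abs]

theorem abs_smoothedPowDeriv2_le (hp1 : 1 ≤ p) (hp2 : p ≤ 2) (hβ : 0 < β) (hv : 0 < v) :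
    |smoothedPowDeriv2 p β v| ≤ 2 * β := by
  set t := β * v ^ (2 - p) with ht_def
  have ht : 0 < t := mul_pos hβ (rpow_pos_of_pos hv _)
  have hc : 0 < cosh t ^ 2 := by positivity
  have hvt : v ^ (p - 2) = β / t := by
    rw [ht_def, show p - 2 = -(2 - p) by ring, rpow_neg hv.le]
    field_simp
  have key : smoothedPowDeriv2 p β v = β * (p * (p - 1) * (tanh t / t) +
      (2 - p) * (p + 1) * (1 / cosh t ^ 2) - 2 * (2 - p) ^ 2 * (t * tanh t / cosh t ^ 2)) := by
    rw [smoothedPowDeriv2, ← ht_def, hvt, ht_def]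
    field_simp
  have htanh : tanh t / t ∈ Set.Icc (0 : ℝ) 1 :=
    ⟨div_nonneg (tanh_nonneg ht.le) ht.le, (div_le_one ht).mpr (tanh_le_self ht.le)⟩
  have hsech : 1 / cosh t ^ 2 ∈ Set.Icc (0 : ℝ) 1 :=
    ⟨by positivity, (div_le_one hc).mpr (one_le_pow₀ (one_le_cosh t))⟩
  have hdecay : t * tanh t / cosh t ^ 2 ∈ Set.Icc (0 : ℝ) 1 :=
    ⟨div_nonneg (mul_nonneg ht.le (tanh_nonneg ht.le)) hc.le,
      (div_le_one hc).mpr (mul_tanh_le_cosh_sq ht.le)⟩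
  rw [key, abs_mul, abs_of_pos hβ, mul_comm 2 β]
  exact mul_le_mul_of_nonneg_left (abs_weighted_sum_le_two hp1 hp2 htanh hsech hdecay) hβ.le

end

theorem smoothed_power_second_deriv_bound (p : ℝ) (hp1 : 1 ≤ p) (hp2 : p < 2) :
    ∃ C : ℝ, 0 < C ∧ ∀ β : ℝ, 0 < β → ∀ u : ℝ,
      |deriv (deriv (fun v : ℝ => |v| ^ p * Real.tanh (β * |v| ^ (2 - p)))) u| ≤
        C * β := by
  refine ⟨2, two_pos, fun β hβ u => ?_⟩
  change |deriv (deriv fun v => smoothedPow p β |v|) u| ≤ 2 * β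
  rw [deriv_comp_abs (fun v hv => hasDerivAt_smoothedPow p β hv) (abs_smoothedPow_le p β hβ.le)]
  rcases eq_or_ne u 0 with rfl | hu
  · rw [(hasDerivAt_sign_mul_comp_abs_zero
      (tendsto_smoothedPowDeriv_div_self p β hp2 hβ.ne')).deriv, abs_of_pos (by positivity)]
  · rw [(hasDerivAt_sign_mul_comp_abs hu
      (hasDerivAt_smoothedPowDeriv p β (abs_pos.mpr hu))).deriv]
    exact abs_smoothedPowDeriv2_le p β hp1 hp2.le hβ (abs_pos.mpr hu)
end

section
/- Let U be a nonnegative random variable, let p ∈ [1,2), and suppose there exist constants δ, H, c > 0 such that U admits a Lebesgue density f_U on (0,c) satisfying f_U(t) ≤ H·t^{δ-1} for all t ∈ (0,c). Then there exists a constant K > 0 (depending on p, δ, H, c) such that for all sufficiently large β > 0, E[U^p·(1 - tanh(β·U^{2-p}))] ≤ K·β^{-(p+δ)/(2-p)}. -/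
/-!
Write `a = 2 - p` and `r = (p + δ) / a`. Besides `1 - tanh x ≤ 2`, one has
`1 - tanh x ≤ 2 exp (-2x) ≤ C_q x^(-q)` for every `q ≥ 0`. On `(0, c)` the law of `U` has density
at most `H t^(δ - 1)`, so that part of the expectation is at most
`H ∫₀^∞ t^(p + δ - 1) (1 - tanh (β t^a)) dt`. Splitting at `t₀ = β^(-1/a)`, where `β t^a = 1`, and
using the bound `2` below `t₀` and `C_q` with `q = (p + δ + 1) / a` above it, gives
`2 t₀^(p + δ) / (p + δ) + C_q β^(-q) / t₀`, both terms of order `β^(-r)`. Off `(0, c)` the variable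
`U` is either `0` or at least `c`, and there `C_r` gives
`t^p (1 - tanh (β t^a)) ≤ C_r β^(-r) t^(-δ) ≤ C_r c^(-δ) β^(-r)`.
-/

open MeasureTheory Real Set
open scoped ENNReal

namespace Real

theorem continuous_tanh : Continuous tanh := by
  simp only [funext tanh_eq_sinh_div_cosh]
  exact continuous_sinh.div continuous_cosh fun x => (cosh_pos x).ne'

theorem one_sub_tanh_nonneg (x : ℝ) : 0 ≤ 1 - tanh x :=
  sub_nonneg.2 (tanh_lt_one x).le

theorem one_sub_tanh_le_two (x : ℝ) : 1 - tanh x ≤ 2 := by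
  linarith [neg_one_lt_tanh x]

theorem one_sub_tanh_le_two_mul_exp (x : ℝ) : 1 - tanh x ≤ 2 * exp (-(2 * x)) := by
  have hx := exp_pos x
  have hnx := exp_pos (-x)
  have hsplit : exp (-(2 * x)) * exp x = exp (-x) := by rw [← exp_add]; ring_nf
  rw [tanh_eq, one_sub_div (by positivity), div_le_iff₀ (by positivity)]
  nlinarith

theorem exists_exp_neg_le_rpow_neg {q : ℝ} (hq : 0 ≤ q) :
    ∃ C > 0, ∀ y > 0, exp (-y) ≤ C * y ^ (-q) := by
  set n := ⌈q⌉₊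
  refine ⟨n.factorial + 1, by positivity, fun y hy => ?_⟩
  have hpow : y ^ q ≤ 1 + y ^ n := by
    rcases le_total y 1 with hy1 | hy1
    · linarith [rpow_le_one hy.le hy1 hq, pow_nonneg hy.le n]
    · have := rpow_le_rpow_of_exponent_le hy1 (Nat.le_ceil q)
      rw [rpow_natCast] at this
      linarith
  have hfac : y ^ n ≤ n.factorial * exp y := by
    have := pow_div_factorial_le_exp y hy.le n
    rwa [div_le_iff₀ (by positivity), mul_comm] at this
  rw [rpow_neg hy.le, exp_neg, ← div_eq_mul_inv, le_div_iff₀ (by positivity),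
    inv_mul_le_iff₀ (exp_pos y)]
  nlinarith [one_le_exp hy.le]

theorem exists_one_sub_tanh_le_rpow_neg {q : ℝ} (hq : 0 ≤ q) :
    ∃ C > 0, ∀ x > 0, 1 - tanh x ≤ C * x ^ (-q) := by
  obtain ⟨C, hC, hexp⟩ := exists_exp_neg_le_rpow_neg hq
  refine ⟨2 * C * 2 ^ (-q), by positivity, fun x hx => ?_⟩
  calc 1 - tanh x ≤ 2 * exp (-(2 * x)) := one_sub_tanh_le_two_mul_exp x
    _ ≤ 2 * (C * (2 * x) ^ (-q)) := by gcongr; exact hexp _ (by positivity)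
    _ = 2 * C * 2 ^ (-q) * x ^ (-q) := by rw [mul_rpow zero_le_two hx.le]; ring

end Real

theorem rpow_mul_one_sub_tanh_le {C s : ℝ} (hC : ∀ x > 0, 1 - tanh x ≤ C * x ^ (-s))
    (p a : ℝ) {β t : ℝ} (hβ : 0 < β) (ht : 0 < t) :
    t ^ p * (1 - tanh (β * t ^ a)) ≤ C * β ^ (-s) * t ^ (p - a * s) := by
  calc t ^ p * (1 - tanh (β * t ^ a)) ≤ t ^ p * (C * (β * t ^ a) ^ (-s)) := by
        gcongr; exact hC _ (by positivity)
    _ = C * β ^ (-s) * t ^ (p - a * s) := by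
        rw [mul_rpow hβ.le (by positivity), ← rpow_mul ht.le, sub_eq_add_neg, rpow_add ht]
        ring_nf

theorem lintegral_Ioc_rpow_sub_one {γ b : ℝ} (hγ : 0 < γ) (hb : 0 ≤ b) :
    ∫⁻ t in Ioc 0 b, ENNReal.ofReal (t ^ (γ - 1)) = ENNReal.ofReal (b ^ γ / γ) := by
  have hint : IntegrableOn (fun t : ℝ => t ^ (γ - 1)) (Ioc 0 b) := by
    rw [← intervalIntegrable_iff_integrableOn_Ioc_of_le hb]
    exact intervalIntegral.intervalIntegrable_rpow' (by linarith)
  have hnn : 0 ≤ᵐ[volume.restrict (Ioc 0 b)] fun t : ℝ => t ^ (γ - 1) := by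
    filter_upwards [ae_restrict_mem measurableSet_Ioc] with t ht
    exact rpow_nonneg ht.1.le _
  rw [← ofReal_integral_eq_lintegral_ofReal hint hnn, ← intervalIntegral.integral_of_le hb,
    integral_rpow (Or.inl (by linarith)), sub_add_cancel, zero_rpow hγ.ne', sub_zero]

theorem lintegral_Ioi_rpow {s b : ℝ} (hs : s < -1) (hb : 0 < b) :
    ∫⁻ t in Ioi b, ENNReal.ofReal (t ^ s) = ENNReal.ofReal (-b ^ (s + 1) / (s + 1)) := by
  have hnn : 0 ≤ᵐ[volume.restrict (Ioi b)] fun t : ℝ => t ^ s := by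
    filter_upwards [ae_restrict_mem measurableSet_Ioi] with t ht
    exact rpow_nonneg (hb.trans ht).le _
  rw [← ofReal_integral_eq_lintegral_ofReal (integrableOn_Ioi_rpow_of_lt hs hb) hnn,
    integral_Ioi_rpow_of_lt hs hb]

theorem exists_lintegral_Ioi_rpow_mul_one_sub_tanh_le {a γ : ℝ} (ha : 0 < a) (hγ : 0 < γ) :
    ∃ K > 0, ∀ β > 0, ∫⁻ t in Ioi 0, ENNReal.ofReal (t ^ (γ - 1) * (1 - tanh (β * t ^ a))) ≤
      ENNReal.ofReal (K * β ^ (-γ / a)) := by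
  obtain ⟨C, hC, htanh⟩ := exists_one_sub_tanh_le_rpow_neg (q := (γ + 1) / a) (by positivity)
  refine ⟨2 / γ + C, by positivity, fun β hβ => ?_⟩
  set t₀ := β ^ (-a⁻¹)
  have ht₀ : 0 < t₀ := rpow_pos_of_pos hβ _
  have hnear : ∀ t ∈ Ioc 0 t₀, ENNReal.ofReal (t ^ (γ - 1) * (1 - tanh (β * t ^ a))) ≤
      ENNReal.ofReal 2 * ENNReal.ofReal (t ^ (γ - 1)) := fun t ht => by
    rw [← ENNReal.ofReal_mul zero_le_two, mul_comm 2]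
    gcongr
    · exact rpow_nonneg ht.1.le _
    · exact one_sub_tanh_le_two _
  have hfar : ∀ t ∈ Ioi t₀, ENNReal.ofReal (t ^ (γ - 1) * (1 - tanh (β * t ^ a))) ≤
      ENNReal.ofReal (C * β ^ (-((γ + 1) / a))) * ENNReal.ofReal (t ^ (-2 : ℝ)) := fun t ht => by
    rw [← ENNReal.ofReal_mul (by positivity)]
    refine ENNReal.ofReal_le_ofReal ((rpow_mul_one_sub_tanh_le htanh _ _ hβ
      (ht₀.trans ht)).trans_eq ?_)
    congr 2
    field_simp
    ring
  have hscale_near : t₀ ^ γ = β ^ (-γ / a) := by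
    rw [← rpow_mul hβ.le]; ring_nf
  have hscale_far : β ^ (-((γ + 1) / a)) * (-t₀ ^ (-2 + 1 : ℝ) / (-2 + 1)) = β ^ (-γ / a) := by
    rw [show (-2 + 1 : ℝ) = -1 by norm_num, neg_div_neg_eq, div_one, ← rpow_mul hβ.le,
      ← rpow_add hβ]
    congr 1
    field_simp
    ring
  rw [← Ioc_union_Ioi_eq_Ioi ht₀.le, lintegral_union measurableSet_Ioi (Ioc_disjoint_Ioi le_rfl)]
  calc _ ≤ (∫⁻ t in Ioc 0 t₀, ENNReal.ofReal 2 * ENNReal.ofReal (t ^ (γ - 1))) +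
        ∫⁻ t in Ioi t₀, ENNReal.ofReal (C * β ^ (-((γ + 1) / a))) *
          ENNReal.ofReal (t ^ (-2 : ℝ)) :=
        add_le_add (setLIntegral_mono (by fun_prop) hnear) (setLIntegral_mono (by fun_prop) hfar)
    _ = ENNReal.ofReal 2 * ENNReal.ofReal (t₀ ^ γ / γ) + ENNReal.ofReal (C * β ^ (-((γ + 1) / a)))
          * ENNReal.ofReal (-t₀ ^ (-2 + 1 : ℝ) / (-2 + 1)) := by
        rw [lintegral_const_mul' _ _ ENNReal.ofReal_ne_top, lintegral_const_mul' _ _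
          ENNReal.ofReal_ne_top, lintegral_Ioc_rpow_sub_one hγ ht₀.le,
          lintegral_Ioi_rpow (by norm_num) ht₀]
    _ = ENNReal.ofReal ((2 / γ + C) * β ^ (-γ / a)) := by
        rw [← ENNReal.ofReal_mul zero_le_two, ← ENNReal.ofReal_mul (by positivity), mul_assoc C,
          hscale_far, hscale_near, ← ENNReal.ofReal_add (by positivity) (by positivity)]
        ring_nf

theorem restrict_le_withDensity_of_density_le {α : Type*} [MeasurableSpace α]
    {μ ν : Measure α} {S : Set α} (hS : MeasurableSet S) {f g : α → ℝ}
    (hdens : ∀ s, MeasurableSet s → s ⊆ S → ν s = ∫⁻ t in s, ENNReal.ofReal (f t) ∂μ)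
    (hfg : ∀ t ∈ S, f t ≤ g t) :
    ν.restrict S ≤ (μ.restrict S).withDensity fun t => ENNReal.ofReal (g t) := by
  refine Measure.le_iff.2 fun s hs => ?_
  rw [Measure.restrict_apply hs, withDensity_apply _ hs, Measure.restrict_restrict hs,
    hdens _ (hs.inter hS) inter_subset_right]
  exact lintegral_mono_ae <| (ae_restrict_mem (hs.inter hS)).mono fun t ht =>
    ENNReal.ofReal_le_ofReal (hfg t ht.2)

noncomputable def smoothingBias (p β t : ℝ) : ℝ := t ^ p * (1 - tanh (β * t ^ (2 - p)))

section smoothingBias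

variable {p β : ℝ}

theorem measurable_smoothingBias (p β : ℝ) : Measurable (smoothingBias p β) := by
  have := continuous_tanh.measurable
  unfold smoothingBias
  fun_prop

theorem smoothingBias_nonneg {t : ℝ} (ht : 0 ≤ t) : 0 ≤ smoothingBias p β t :=
  mul_nonneg (rpow_nonneg ht p) (one_sub_tanh_nonneg _)

theorem smoothingBias_le_of_le {δ c C t : ℝ} (hp : p < 2) (hδ : 0 ≤ δ) (hβ : 0 < β) (hc : 0 < c)
    (hct : c ≤ t) (hC0 : 0 ≤ C) (hC : ∀ x > 0, 1 - tanh x ≤ C * x ^ (-((p + δ) / (2 - p)))) :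
    smoothingBias p β t ≤ C * c ^ (-δ) * β ^ (-(p + δ) / (2 - p)) := by
  calc smoothingBias p β t
      ≤ C * β ^ (-((p + δ) / (2 - p))) * t ^ (p - (2 - p) * ((p + δ) / (2 - p))) :=
        rpow_mul_one_sub_tanh_le hC _ _ hβ (hc.trans_le hct)
    _ = C * β ^ (-(p + δ) / (2 - p)) * t ^ (-δ) := by
        rw [mul_div_cancel₀ _ (sub_ne_zero.2 hp.ne'), neg_div]
        ring_nf
    _ ≤ C * β ^ (-(p + δ) / (2 - p)) * c ^ (-δ) :=
        mul_le_mul_of_nonneg_left (rpow_le_rpow_of_nonpos hc hct (neg_nonpos.2 hδ))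
          (by positivity)
    _ = C * c ^ (-δ) * β ^ (-(p + δ) / (2 - p)) := by ring

theorem setLIntegral_Ioo_smoothingBias_le {ν : Measure ℝ} {δ H c : ℝ} (hH : 0 ≤ H)
    (hν : ν.restrict (Ioo 0 c) ≤
      (volume.restrict (Ioo 0 c)).withDensity fun t => ENNReal.ofReal (H * t ^ (δ - 1))) :
    ∫⁻ t in Ioo 0 c, ENNReal.ofReal (smoothingBias p β t) ∂ν ≤
      ENNReal.ofReal H *
        ∫⁻ t in Ioi 0, ENNReal.ofReal (t ^ (p + δ - 1) * (1 - tanh (β * t ^ (2 - p)))) := by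
  calc ∫⁻ t in Ioo 0 c, ENNReal.ofReal (smoothingBias p β t) ∂ν
      ≤ ∫⁻ t, ENNReal.ofReal (smoothingBias p β t) ∂(volume.restrict (Ioo 0 c)).withDensity
          fun t => ENNReal.ofReal (H * t ^ (δ - 1)) := lintegral_mono' hν le_rfl
    _ = ∫⁻ t in Ioo 0 c, ENNReal.ofReal H *
          ENNReal.ofReal (t ^ (p + δ - 1) * (1 - tanh (β * t ^ (2 - p)))) := by
        rw [lintegral_withDensity_eq_lintegral_mul _ (by fun_prop)
          (measurable_smoothingBias p β).ennreal_ofReal]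
        refine setLIntegral_congr_fun measurableSet_Ioo fun t ht => ?_
        rw [Pi.mul_apply, ← ENNReal.ofReal_mul (mul_nonneg hH (rpow_pos_of_pos ht.1 _).le),
          ← ENNReal.ofReal_mul hH, smoothingBias, show p + δ - 1 = (δ - 1) + p by ring,
          rpow_add ht.1]
        ring_nf
    _ ≤ _ := by
        rw [← lintegral_const_mul' _ _ ENNReal.ofReal_ne_top]
        exact lintegral_mono_set Ioo_subset_Ioi_self

theorem setLIntegral_compl_Ioo_smoothingBias_le {ν : Measure ℝ} [IsProbabilityMeasure ν]
    (hν : ∀ᵐ t ∂ν, 0 ≤ t) {δ c C : ℝ} (hp0 : p ≠ 0) (hp : p < 2) (hδ : 0 ≤ δ) (hβ : 0 < β)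
    (hc : 0 < c) (hC0 : 0 ≤ C) (hC : ∀ x > 0, 1 - tanh x ≤ C * x ^ (-((p + δ) / (2 - p)))) :
    ∫⁻ t in (Ioo 0 c)ᶜ, ENNReal.ofReal (smoothingBias p β t) ∂ν ≤
      ENNReal.ofReal (C * c ^ (-δ) * β ^ (-(p + δ) / (2 - p))) := by
  have hpt : ∀ᵐ t ∂ν.restrict (Ioo 0 c)ᶜ, ENNReal.ofReal (smoothingBias p β t) ≤
      ENNReal.ofReal (C * c ^ (-δ) * β ^ (-(p + δ) / (2 - p))) := by
    filter_upwards [ae_restrict_of_ae hν, ae_restrict_mem measurableSet_Ioo.compl]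
      with t ht0 htc
    refine ENNReal.ofReal_le_ofReal ?_
    rcases ht0.eq_or_lt with rfl | htpos
    · rw [smoothingBias, zero_rpow hp0, zero_mul]
      positivity
    exact smoothingBias_le_of_le hp hδ hβ hc (not_lt.1 fun h => htc ⟨htpos, h⟩) hC0 hC
  calc ∫⁻ t in (Ioo 0 c)ᶜ, ENNReal.ofReal (smoothingBias p β t) ∂ν
      ≤ ∫⁻ _ in (Ioo 0 c)ᶜ, ENNReal.ofReal (C * c ^ (-δ) * β ^ (-(p + δ) / (2 - p))) ∂ν :=
        lintegral_mono_ae hpt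
    _ ≤ _ := by
        rw [setLIntegral_const]
        exact mul_le_of_le_one_right' prob_le_one

end smoothingBias

theorem smoothing_bias_bound_general {Ω : Type*} [MeasurableSpace Ω]
    (μ : Measure Ω) [IsProbabilityMeasure μ]
    (U : Ω → ℝ) (hUm : Measurable U) (hU0 : ∀ ω, 0 ≤ U ω)
    (p δ H c : ℝ) (hp1 : 1 ≤ p) (hp2 : p < 2)
    (hδ : 0 < δ) (hH : 0 < H) (hc : 0 < c)
    (f : ℝ → ℝ)
    (hdens : ∀ s : Set ℝ, MeasurableSet s → s ⊆ Set.Ioo (0 : ℝ) c →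
      (μ.map U) s = ∫⁻ t in s, ENNReal.ofReal (f t))
    (hfb : ∀ t ∈ Set.Ioo (0 : ℝ) c, f t ≤ H * t ^ (δ - 1)) :
    ∃ K : ℝ, 0 < K ∧ ∃ β₀ : ℝ, 0 < β₀ ∧ ∀ β : ℝ, β₀ ≤ β →
      ∫ ω, (U ω) ^ p * (1 - Real.tanh (β * (U ω) ^ (2 - p))) ∂μ ≤
        K * β ^ (-(p + δ) / (2 - p)) := by
  obtain ⟨K, hK, hbulk⟩ :=
    exists_lintegral_Ioi_rpow_mul_one_sub_tanh_le (a := 2 - p) (γ := p + δ) (by linarith)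
      (by linarith)
  obtain ⟨C, hC, htanh⟩ := exists_one_sub_tanh_le_rpow_neg (q := (p + δ) / (2 - p))
    (div_nonneg (by linarith) (by linarith))
  refine ⟨H * K + C * c ^ (-δ), by positivity, 1, one_pos, fun β hβ => ?_⟩
  have hβ0 : 0 < β := one_pos.trans_le hβ
  have : IsProbabilityMeasure (μ.map U) := Measure.isProbabilityMeasure_map hUm.aemeasurable
  have hlaw_nonneg : ∀ᵐ t ∂μ.map U, 0 ≤ t :=
    (ae_map_iff hUm.aemeasurable measurableSet_Ici).2 (ae_of_all _ hU0)
  have hnear := (setLIntegral_Ioo_smoothingBias_le (β := β) hH.le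
    (restrict_le_withDensity_of_density_le measurableSet_Ioo hdens hfb)).trans
      (mul_le_mul_right (hbulk β hβ0) _)
  have hfar := setLIntegral_compl_Ioo_smoothingBias_le hlaw_nonneg (by linarith) hp2 hδ.le hβ0
    hc hC.le htanh
  change ∫ ω, smoothingBias p β (U ω) ∂μ ≤ _
  rw [integral_eq_lintegral_of_nonneg_ae (ae_of_all _ fun ω => smoothingBias_nonneg (hU0 ω))
    ((measurable_smoothingBias p β).comp hUm).aestronglyMeasurable]
  refine ENNReal.toReal_le_of_le_ofReal (by positivity) ?_
  rw [← lintegral_map (measurable_smoothingBias p β).ennreal_ofReal hUm,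
    ← lintegral_add_compl _ measurableSet_Ioo, add_mul, mul_assoc,
    ENNReal.ofReal_add (by positivity) (by positivity), ENNReal.ofReal_mul hH.le]
  exact add_le_add hnear hfar

theorem smoothing_bias_bound {Ω : Type*} [MeasurableSpace Ω]
    (μ : Measure Ω) [IsProbabilityMeasure μ]
    (U : Ω → ℝ) (hUm : Measurable U) (hU0 : ∀ ω, 0 ≤ U ω)
    (hUb : ∃ M : ℝ, ∀ ω, U ω ≤ M)
    (p δ H c : ℝ) (hp1 : 1 ≤ p) (hp2 : p < 2)
    (hδ : 0 < δ) (hH : 0 < H) (hc : 0 < c)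
    (f : ℝ → ℝ) (hfm : Measurable f) (hf0 : ∀ t ∈ Set.Ioo (0 : ℝ) c, 0 ≤ f t)
    (hdens : ∀ s : Set ℝ, MeasurableSet s → s ⊆ Set.Ioo (0 : ℝ) c →
      (μ.map U) s = ∫⁻ t in s, ENNReal.ofReal (f t))
    (hfb : ∀ t ∈ Set.Ioo (0 : ℝ) c, f t ≤ H * t ^ (δ - 1)) :
    ∃ K : ℝ, 0 < K ∧ ∃ β₀ : ℝ, 0 < β₀ ∧ ∀ β : ℝ, β₀ ≤ β →
      ∫ ω, (U ω) ^ p * (1 - Real.tanh (β * (U ω) ^ (2 - p))) ∂μ ≤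
        K * β ^ (-(p + δ) / (2 - p)) :=
  smoothing_bias_bound_general μ U hUm hU0 p δ H c hp1 hp2 hδ hH hc f hdens hfb
end
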